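/- For every n ≥ 2, the list distinguishing number of the book graph B_n equals its distinguishing number: D_l(B_n) = D(B_n) = ⌈√n⌉. -/

import Mathlib

/-- A labeling `φ` of the vertices of `G` is distinguishing if the only
automorphism of `G` preserving all labels is the identity. -/
def IsDistinguishing {V α : Type*} (G : SimpleGraph V) (φ : V → α) : Prop :=
  ∀ σ : G ≃g G, (∀ v, φ (σ v) = φ v) → ∀ v, σ v = v

/-- The distinguishing number `D(G)`. -/
noncomputable def distinguishingNumber {V : Type*} (G : SimpleGraph V) : ℕ :=
  sInf {r : ℕ | ∃ φ : V → Fin r, IsDistinguishing G φ}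

/-- The list distinguishing number `D_l(G)`. -/
noncomputable def listDistinguishingNumber {V : Type*} (G : SimpleGraph V) : ℕ :=
  sInf {k : ℕ | ∀ L : V → Finset ℕ, (∀ v, (L v).card = k) →
    ∃ φ : V → ℕ, (∀ v, φ v ∈ L v) ∧ IsDistinguishing G φ}

/-- The star `K_{1,n}` with center `none` and leaves `some i`. -/
def starGraph (n : ℕ) : SimpleGraph (Option (Fin n)) :=
  SimpleGraph.fromRel (fun u _ => u = none)

/-- The book graph `B_n = K_{1,n} □ P_2`; the hinge vertices are
`(none, 0)` and `(none, 1)`. -/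
def bookGraph (n : ℕ) : SimpleGraph ((Option (Fin n)) × Fin 2) :=
  (starGraph n).boxProd (⊤ : SimpleGraph (Fin 2))

section Aux

variable {n : ℕ}

lemma fin2_other : ∀ j b : Fin 2, j ≠ b → b = j + 1 := by decide
lemma fin2_ne_add_one : ∀ j : Fin 2, j ≠ j + 1 := by decide
lemma fin2_cases : ∀ c : Fin 2, c = 0 ∨ c = 1 := by decide

lemma star_adj (u v : Option (Fin n)) :
    (starGraph n).Adj u v ↔ u ≠ v ∧ (u = none ∨ v = none) := by
  simp [starGraph, SimpleGraph.fromRel_adj]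

lemma book_adj (a b : Option (Fin n) × Fin 2) :
    (bookGraph n).Adj a b ↔
      (a.1 ≠ b.1 ∧ (a.1 = none ∨ b.1 = none) ∧ a.2 = b.2) ∨ (a.1 = b.1 ∧ a.2 ≠ b.2) := by
  cases a; cases b
  simp [bookGraph, SimpleGraph.boxProd_adj, star_adj]
  tauto

lemma adj_some {i : Fin n} {j : Fin 2} {w : Option (Fin n) × Fin 2}
    (h : (bookGraph n).Adj (some i, j) w) : w = (none, j) ∨ w = (some i, j + 1) := by
  rw [book_adj] at h
  simp only [ne_eq] at h
  obtain ⟨h1, h2, h3⟩ | ⟨h1, h2⟩ := h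
  · left
    rcases h2 with h2 | h2
    · exact absurd h2 (by simp)
    · exact Prod.ext h2 h3.symm
  · right
    exact Prod.ext h1.symm (fin2_other j w.2 h2)

lemma adj_none {j : Fin 2} {w : Option (Fin n) × Fin 2}
    (h : (bookGraph n).Adj (none, j) w) : w = (none, j + 1) ∨ (w.1 ≠ none ∧ w.2 = j) := by
  rw [book_adj] at h
  obtain ⟨h1, _, h3⟩ | ⟨h1, h2⟩ := h
  · right; exact ⟨fun hc => h1 hc.symm, h3.symm⟩
  · left
    exact Prod.ext h1.symm (fin2_other j w.2 h2)

lemma book_adj_of_star {u v : Option (Fin n)} (h : (starGraph n).Adj u v) (j : Fin 2) :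
    (bookGraph n).Adj (u, j) (v, j) := by
  rw [book_adj]; rw [star_adj] at h; exact Or.inl ⟨h.1, h.2, rfl⟩

lemma book_adj_flip (x : Option (Fin n)) (j : Fin 2) :
    (bookGraph n).Adj (x, j) (x, j + 1) := by
  rw [book_adj]; exact Or.inr ⟨rfl, fin2_ne_add_one j⟩

lemma star_adj_none_some (i : Fin n) : (starGraph n).Adj none (some i) := by
  rw [star_adj]; exact ⟨by simp, Or.inl rfl⟩

/-- the automorphism swapping pages `i` and `k` -/
def pageSwap (i k : Fin n) : bookGraph n ≃g bookGraph n where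
  toEquiv := (Equiv.optionCongr (Equiv.swap i k)).prodCongr (Equiv.refl _)
  map_rel_iff' := by
    intro a b
    cases' a with a1 a2; cases' b with b1 b2
    simp only [bookGraph, SimpleGraph.boxProd_adj, Equiv.prodCongr_apply, Equiv.coe_refl,
      Prod.map, Equiv.optionCongr_apply, id_eq, star_adj]
    rw [Option.map_eq_none_iff, Option.map_eq_none_iff]
    constructor
    · rintro (⟨⟨h1, h2⟩, h3⟩ | ⟨h1, h2⟩)
      · exact Or.inl ⟨⟨fun hc => h1 (by rw [hc]), h2⟩, h3⟩
      · exact Or.inr ⟨h1, Option.map_injective (Equiv.swap i k).injective h2⟩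
    · rintro (⟨⟨h1, h2⟩, h3⟩ | ⟨h1, h2⟩)
      · exact Or.inl ⟨⟨fun hc => h1 (Option.map_injective (Equiv.swap i k).injective hc), h2⟩, h3⟩
      · exact Or.inr ⟨h1, by rw [h2]⟩

lemma pageSwap_apply_some (i k m : Fin n) (j : Fin 2) :
    pageSwap i k (some m, j) = (some (Equiv.swap i k m), j) := rfl

lemma pageSwap_apply_none (i k : Fin n) (j : Fin 2) :
    pageSwap i k (none, j) = (none, j) := rfl

lemma not_distinguishing {α : Type*} (φ : Option (Fin n) × Fin 2 → α) (i k : Fin n) (hik : i ≠ k)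
    (h0 : φ (some i, 0) = φ (some k, 0)) (h1 : φ (some i, 1) = φ (some k, 1)) :
    ¬ IsDistinguishing (bookGraph n) φ := by
  intro h
  have key := h (pageSwap i k) ?_ (some i, 0)
  · rw [pageSwap_apply_some, Equiv.swap_apply_left] at key
    have h2 : (some k : Option (Fin n)) = some i := congrArg Prod.fst key
    exact hik (Option.some_injective _ h2).symm
  · rintro ⟨x, j⟩
    cases' x with m
    · rw [pageSwap_apply_none]
    · rw [pageSwap_apply_some]
      rcases eq_or_ne m i with rfl | hmi
      · rw [Equiv.swap_apply_left]
        fin_cases j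
        · exact h0.symm
        · exact h1.symm
      rcases eq_or_ne m k with rfl | hmk
      · rw [Equiv.swap_apply_right]
        fin_cases j
        · exact h0
        · exact h1
      · rw [Equiv.swap_apply_of_ne_of_ne hmi hmk]

lemma distinguishing_of {α : Type*} (hn : 2 ≤ n) (φ : Option (Fin n) × Fin 2 → α)
    (hh : φ (none, 0) ≠ φ (none, 1))
    (hp : ∀ i k : Fin n, φ (some i, 0) = φ (some k, 0) → φ (some i, 1) = φ (some k, 1) → i = k) :
    IsDistinguishing (bookGraph n) φ := by
  intro σ hφ
  have hinj : Function.Injective σ := fun a b h => by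
    simpa using congrArg σ.toEquiv.symm h
  -- Step 1: hinges map into hinges
  have hinge : ∀ j : Fin 2, (σ (none, j)).1 = none := by
    intro j
    by_contra hc
    obtain ⟨i, hi⟩ : ∃ i, (σ (none, j)).1 = some i := Option.ne_none_iff_exists'.mp hc
    have hσ : σ (none, j) = (some i, (σ (none, j)).2) := Prod.ext hi rfl
    set b := (σ (none, j)).2
    set p0 : Fin n := ⟨0, by omega⟩
    set p1 : Fin n := ⟨1, by omega⟩
    have hp01 : p0 ≠ p1 := by simp [p0, p1, Fin.ext_iff]
    set u1 : Option (Fin n) × Fin 2 := (some p0, j)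
    set u2 : Option (Fin n) × Fin 2 := (some p1, j)
    set u3 : Option (Fin n) × Fin 2 := (none, j + 1)
    have a1 : (bookGraph n).Adj (none, j) u1 := book_adj_of_star (star_adj_none_some p0) j
    have a2 : (bookGraph n).Adj (none, j) u2 := book_adj_of_star (star_adj_none_some p1) j
    have a3 : (bookGraph n).Adj (none, j) u3 := book_adj_flip none j
    have b1 := σ.map_rel_iff.mpr a1
    have b2 := σ.map_rel_iff.mpr a2
    have b3 := σ.map_rel_iff.mpr a3
    rw [hσ] at b1 b2 b3
    have c1 := adj_some b1
    have c2 := adj_some b2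
    have c3 := adj_some b3
    have d12 : σ u1 ≠ σ u2 := fun h => hp01 (by injection (hinj h) with h' _; injection h')
    have d13 : σ u1 ≠ σ u3 := fun h => by
      have := hinj h; simp [u1, u3] at this
    have d23 : σ u2 ≠ σ u3 := fun h => by
      have := hinj h; simp [u2, u3] at this
    rcases c1 with e1 | e1 <;> rcases c2 with e2 | e2 <;> rcases c3 with e3 | e3 <;>
      first
        | exact d12 (e1.trans e2.symm)
        | exact d13 (e1.trans e3.symm)
        | exact d23 (e2.trans e3.symm)
  -- Step 2: hinges are fixed
  have h0 : σ (none, 0) = (none, 0) := by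
    obtain ⟨c, hc⟩ : ∃ c, σ (none, 0) = (none, c) :=
      ⟨(σ (none, 0)).2, Prod.ext (hinge 0) rfl⟩
    rcases fin2_cases c with rfl | rfl
    · exact hc
    · exact absurd (hc ▸ hφ (none, 0)) hh.symm
  have h1 : σ (none, 1) = (none, 1) := by
    obtain ⟨c, hc⟩ : ∃ c, σ (none, 1) = (none, c) :=
      ⟨(σ (none, 1)).2, Prod.ext (hinge 1) rfl⟩
    rcases fin2_cases c with rfl | rfl
    · exact absurd (hc ▸ hφ (none, 1)) hh
    · exact hc
  -- Step 3: pages are fixed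
  have hpage : ∀ i : Fin n, σ (some i, 0) = (some i, 0) ∧ σ (some i, 1) = (some i, 1) := by
    intro i
    have a1 : (bookGraph n).Adj (none, 0) (some i, 0) :=
      book_adj_of_star (star_adj_none_some i) 0
    have b1 := σ.map_rel_iff.mpr a1
    rw [h0] at b1
    rcases adj_none b1 with hcase | ⟨hne, h2⟩
    · exfalso
      have : σ (some i, 0) = σ (none, 1) := by rw [hcase, h1]; norm_num
      have := hinj this
      simp at this
    obtain ⟨k, hk⟩ : ∃ k, (σ (some i, 0)).1 = some k := Option.ne_none_iff_exists'.mp hne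
    have hσ0 : σ (some i, 0) = (some k, 0) := Prod.ext hk h2
    have a2 : (bookGraph n).Adj (some i, 0) (some i, 1) := by
      have := book_adj_flip (some i : Option (Fin n)) 0
      norm_num at this; exact this
    have b2 := σ.map_rel_iff.mpr a2
    rw [hσ0] at b2
    rcases adj_some b2 with hcase | hcase
    · exfalso
      have : σ (some i, 1) = σ (none, 0) := by rw [hcase, h0]
      have := hinj this
      simp at this
    have hσ1 : σ (some i, 1) = (some k, 1) := by rw [hcase]; norm_num
    have e0 : φ (some k, 0) = φ (some i, 0) := by rw [← hσ0]; exact hφ _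
    have e1 : φ (some k, 1) = φ (some i, 1) := by rw [← hσ1]; exact hφ _
    have : k = i := hp k i e0 e1
    subst this
    exact ⟨hσ0, hσ1⟩
  rintro ⟨x, j⟩
  cases' x with i
  · rcases fin2_cases j with rfl | rfl
    · exact h0
    · exact h1
  · rcases fin2_cases j with rfl | rfl
    · exact (hpage i).1
    · exact (hpage i).2

lemma ceil_sqrt_le_iff (n r : ℕ) : ⌈Real.sqrt n⌉₊ ≤ r ↔ n ≤ r ^ 2 := by
  rw [Nat.ceil_le, Real.sqrt_le_iff]
  constructor
  · rintro ⟨_, h⟩; exact_mod_cast h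
  · intro h; exact ⟨by positivity, by exact_mod_cast h⟩

lemma exists_injective_choice {β : Type*} [DecidableEq β] :
    ∀ (m : ℕ) (S : Fin m → Finset β), (∀ i, m ≤ (S i).card) →
    ∃ f : Fin m → β, (∀ i, f i ∈ S i) ∧ Function.Injective f := by
  intro m
  induction m with
  | zero => exact fun S _ => ⟨fun i => i.elim0, fun i => i.elim0, fun i => i.elim0⟩
  | succ m ih =>
    intro S hS
    obtain ⟨x, hx⟩ := Finset.card_pos.mp (lt_of_lt_of_le (Nat.succ_pos m) (hS 0))
    obtain ⟨f, hf, hinj⟩ := ih (fun i => (S i.succ).erase x) (fun i => by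
      have h1 := hS i.succ
      have h2 := Finset.pred_card_le_card_erase (s := S i.succ) (a := x)
      show m ≤ ((S i.succ).erase x).card
      omega)
    refine ⟨Fin.cases x f, ?_, ?_⟩
    · intro i
      induction i using Fin.cases with
      | zero => simpa using hx
      | succ i => simpa using Finset.mem_of_mem_erase (hf i)
    · intro a b h
      induction a using Fin.cases with
      | zero =>
        induction b using Fin.cases with
        | zero => rfl
        | succ b =>
          simp only [Fin.cases_zero, Fin.cases_succ] at h
          exact absurd h.symm (Finset.ne_of_mem_erase (hf b))
      | succ a =>
        induction b using Fin.cases with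
        | zero =>
          simp only [Fin.cases_zero, Fin.cases_succ] at h
          exact absurd h (Finset.ne_of_mem_erase (hf a))
        | succ b =>
          simp only [Fin.cases_succ] at h
          rw [hinj h]

/-- a distinguishing labeling needs at least `⌈√n⌉` labels worth of page pairs -/
lemma pages_le_sq {α : Type*} [Fintype α] (hn : 2 ≤ n) (φ : Option (Fin n) × Fin 2 → α)
    (hd : IsDistinguishing (bookGraph n) φ) : n ≤ Fintype.card α * Fintype.card α := by
  by_contra hlt
  push_neg at hlt
  have hcard : Fintype.card (α × α) < Fintype.card (Fin n) := by
    simpa [Fintype.card_prod] using hlt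
  obtain ⟨i, k, hik, heq⟩ := Fintype.exists_ne_map_eq_of_card_lt
    (fun i : Fin n => (φ (some i, 0), φ (some i, 1))) hcard
  exact not_distinguishing φ i k hik (congrArg Prod.fst heq) (congrArg Prod.snd heq) hd

end Aux

/-- For every `n ≥ 2`, `D_l(B_n) = D(B_n) = ⌈√n⌉`. -/
theorem stmt_7 (n : ℕ) (hn : 2 ≤ n) :
    listDistinguishingNumber (bookGraph n) = distinguishingNumber (bookGraph n) ∧
    distinguishingNumber (bookGraph n) = ⌈Real.sqrt n⌉₊ := by
  set R := ⌈Real.sqrt n⌉₊ with hR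
  have hnR : n ≤ R ^ 2 := (ceil_sqrt_le_iff n R).mp le_rfl
  have hR2 : 2 ≤ R := by
    by_contra h
    push_neg at h
    have : n ≤ (R : ℕ) ^ 2 := hnR
    interval_cases R <;> omega
  -- D(B_n) = R
  have hD : distinguishingNumber (bookGraph n) = R := by
    have hmem : R ∈ {r : ℕ | ∃ φ : Option (Fin n) × Fin 2 → Fin r,
        IsDistinguishing (bookGraph n) φ} := by
      have hle : n ≤ R * R := by rw [← pow_two]; exact hnR
      set emb : Fin n → Fin R × Fin R :=
        fun i => finProdFinEquiv.symm (Fin.castLE hle i) with hemb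
      have hembinj : Function.Injective emb := by
        intro a b h
        have := finProdFinEquiv.symm.injective h
        exact Fin.castLE_injective hle this
      refine ⟨fun v => Option.casesOn v.1
        (if v.2 = 0 then (⟨0, by omega⟩ : Fin R) else ⟨1, by omega⟩)
        (fun i => if v.2 = 0 then (emb i).1 else (emb i).2), ?_⟩
      apply distinguishing_of hn
      · show (if (0 : Fin 2) = 0 then _ else _) ≠ (if (1 : Fin 2) = 0 then _ else _)
        rw [if_pos rfl, if_neg (by decide)]
        simp [Fin.ext_iff]
      · intro i k e0 e1
        simp only [Option.casesOn, if_pos, if_neg, show ((0:Fin 2) = 0) = True by simp,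
          if_true] at e0
        have e0' : (emb i).1 = (emb k).1 := by simpa using e0
        have e1' : (emb i).2 = (emb k).2 := by
          have h2 : ((1 : Fin 2) = 0) = False := by simp
          simpa [h2] using e1
        exact hembinj (Prod.ext e0' e1')
    have hlb : ∀ r ∈ {r : ℕ | ∃ φ : Option (Fin n) × Fin 2 → Fin r,
        IsDistinguishing (bookGraph n) φ}, R ≤ r := by
      rintro r ⟨φ, hφ⟩
      rw [hR, ceil_sqrt_le_iff]
      have := pages_le_sq hn φ hφ
      simpa [pow_two] using this
    exact le_antisymm (Nat.sInf_le hmem) (le_csInf ⟨R, hmem⟩ hlb)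
  -- D_l(B_n) = R
  have hDl : listDistinguishingNumber (bookGraph n) = R := by
    have hmem : R ∈ {k : ℕ | ∀ L : Option (Fin n) × Fin 2 → Finset ℕ,
        (∀ v, (L v).card = k) → ∃ φ : Option (Fin n) × Fin 2 → ℕ,
        (∀ v, φ v ∈ L v) ∧ IsDistinguishing (bookGraph n) φ} := by
      intro L hL
      -- choose distinct labels for the two hinges
      obtain ⟨a, ha⟩ := Finset.card_pos.mp (by rw [hL (none, 0)]; omega)
      obtain ⟨b, hb⟩ := Finset.card_pos.mp (show 0 < ((L (none, 1)).erase a).card by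
        have h1 := Finset.pred_card_le_card_erase (s := L (none, 1)) (a := a)
        rw [hL (none, 1)] at h1
        omega)
      have hbmem : b ∈ L (none, 1) := Finset.mem_of_mem_erase hb
      have hba : b ≠ a := Finset.ne_of_mem_erase hb
      -- choose distinct pairs for the pages
      obtain ⟨f, hf, hfinj⟩ := exists_injective_choice n
        (fun i : Fin n => L (some i, 0) ×ˢ L (some i, 1)) (fun i => by
          show n ≤ (L (some i, 0) ×ˢ L (some i, 1)).card
          rw [Finset.card_product, hL (some i, 0), hL (some i, 1)]
          calc n ≤ R ^ 2 := hnR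
            _ = R * R := pow_two R)
      refine ⟨fun v => Option.casesOn v.1
        (if v.2 = 0 then a else b)
        (fun i => if v.2 = 0 then (f i).1 else (f i).2), ?_, ?_⟩
      · rintro ⟨x, j⟩
        cases' x with i
        · rcases fin2_cases j with rfl | rfl
          · simpa using ha
          · show (if (1 : Fin 2) = 0 then a else b) ∈ _
            rw [if_neg (by decide)]
            exact hbmem
        · have hfi := Finset.mem_product.mp (hf i)
          rcases fin2_cases j with rfl | rfl
          · simpa using hfi.1
          · show (if (1 : Fin 2) = 0 then (f i).1 else (f i).2) ∈ _
            rw [if_neg (by decide)]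
            exact hfi.2
      · apply distinguishing_of hn
        · show (if (0 : Fin 2) = 0 then a else b) ≠ (if (1 : Fin 2) = 0 then a else b)
          rw [if_pos rfl, if_neg (by decide)]
          exact hba.symm
        · intro i k e0 e1
          have e0' : (f i).1 = (f k).1 := by simpa using e0
          have e1' : (f i).2 = (f k).2 := by
            have h2 : ((1 : Fin 2) = 0) = False := by simp
            simpa [h2] using e1
          exact hfinj (Prod.ext e0' e1')
    have hlb : ∀ k ∈ {k : ℕ | ∀ L : Option (Fin n) × Fin 2 → Finset ℕ,
        (∀ v, (L v).card = k) → ∃ φ : Option (Fin n) × Fin 2 → ℕ,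
        (∀ v, φ v ∈ L v) ∧ IsDistinguishing (bookGraph n) φ}, R ≤ k := by
      intro k hk
      rw [hR, ceil_sqrt_le_iff]
      by_contra hlt
      push_neg at hlt
      obtain ⟨φ, hmemφ, hdist⟩ := hk (fun _ => Finset.range k) (fun v => Finset.card_range k)
      have hmaps : ∀ i : Fin n, i ∈ (Finset.univ : Finset (Fin n)) →
          (φ (some i, 0), φ (some i, 1)) ∈ Finset.range k ×ˢ Finset.range k := by
        intro i _
        exact Finset.mem_product.mpr ⟨hmemφ (some i, 0), hmemφ (some i, 1)⟩
      have hcard : (Finset.range k ×ˢ Finset.range k).card <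
          (Finset.univ : Finset (Fin n)).card := by
        rw [Finset.card_product, Finset.card_range, Finset.card_univ, Fintype.card_fin]
        calc k * k = k ^ 2 := (pow_two k).symm
          _ < n := hlt
      obtain ⟨i, _, j, _, hij, heq⟩ :=
        Finset.exists_ne_map_eq_of_card_lt_of_maps_to hcard hmaps
      exact not_distinguishing φ i j hij (congrArg Prod.fst heq) (congrArg Prod.snd heq) hdist
    exact le_antisymm (Nat.sInf_le hmem) (le_csInf ⟨R, hmem⟩ hlb)
  rw [listDistinguishingNumber, distinguishingNumber] at *
  exact ⟨hDl.trans hD.symm, hD⟩
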